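/- Let G = (V,E) with V = {1,...,n}, let N_m = {1,...,m}, and for each m let G*(N_m) be the graph on N_m with edge {u,v} iff there is a path in G between u and v whose intermediate vertices lie in V − N_m. Fix 2 ≤ m ≤ n and a subset U ⊆ N_{m−1}. If G*(N_{m−1}) \ U is disconnected, then both G*(N_m) \ (U ∪ {m}) and G*(N_m) \ U are disconnected. -/

import Mathlib

/-- The graph `G*(S)` on vertex subset `S`: distinct `u, v ∈ S` are adjacent iff
there is a path (walk) between `u` and `v` in `G` all of whose intermediate
vertices lie outside `S`. Vertices outside `S` are isolated. -/
def GStar {V : Type} (G : SimpleGraph V) (S : Set V) : SimpleGraph V where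
  Adj u v := u ≠ v ∧ u ∈ S ∧ v ∈ S ∧
    ∃ p : G.Walk u v, ∀ x ∈ p.support, x ≠ u → x ≠ v → x ∉ S
  symm := ⟨by
    rintro u v ⟨hne, hu, hv, p, hp⟩
    refine ⟨hne.symm, hv, hu, p.reverse, ?_⟩
    intro x hx hxv hxu
    exact hp x (by simpa [SimpleGraph.Walk.support_reverse] using hx) hxu hxv⟩
  loopless := ⟨fun u h => h.1 rfl⟩

/-- `a` and `b` are joined by a walk in `G` whose vertices all lie in `A`
(i.e. they are in the same component of the induced subgraph on `A`). -/
def ReachIn {V : Type} (G : SimpleGraph V) (A : Set V) (a b : V) : Prop :=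
  ∃ p : G.Walk a b, ∀ x ∈ p.support, x ∈ A

/-- The vertex set `A` is connected in `H` (restricted to `A`). -/
def ConnOn {V : Type} (H : SimpleGraph V) (A : Set V) : Prop :=
  A.Nonempty ∧ ∀ a ∈ A, ∀ b ∈ A, ReachIn H A a b

/-- The vertex set `A` is disconnected in `H` (restricted to `A`). -/
def DiscOn {V : Type} (H : SimpleGraph V) (A : Set V) : Prop :=
  ∃ a ∈ A, ∃ b ∈ A, ¬ ReachIn H A a b

/-!
Write `S' = N_{m-1}`, `S = N_m = S' ∪ {w}` and `B = S' \ U`. Every vertex of `N_m \ U` lies in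
`B ∪ {w}`, so a `G*(N_m)`-walk joining two vertices of `B` inside `N_m \ U` (or inside
`N_m \ (U ∪ {w}) = B`) can only leave `B` through `w`. Since `w ∉ S'`, concatenating the
`G`-paths behind two consecutive edges `c – w – d` gives a path whose intermediate vertices avoid
`S'`, i.e. a `G*(S')`-edge `c – d`; and a `G*(S)`-edge between vertices of `S'` is a
`G*(S')`-edge. So the walk collapses to a `G*(N_{m-1})`-walk inside `B`, and a disconnection of
`B` persists.
-/

section GStar

variable {V : Type} (G : SimpleGraph V) {S' S : Set V}

lemma gStar_adj_of_subset (hSS : S' ⊆ S) {u v : V} (hu : u ∈ S') (hv : v ∈ S')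
    (h : (GStar G S).Adj u v) : (GStar G S').Adj u v := by
  obtain ⟨hne, -, -, p, hp⟩ := h
  exact ⟨hne, hu, hv, p, fun x hx hxu hxv hxS => hp x hx hxu hxv (hSS hxS)⟩

lemma gStar_adj_of_adj_of_adj (hSS : S' ⊆ S) {w : V} (hw : w ∉ S') {u v : V}
    (hu : u ∈ S') (hv : v ∈ S') (huv : u ≠ v)
    (huw : (GStar G S).Adj u w) (hwv : (GStar G S).Adj w v) : (GStar G S').Adj u v := by
  obtain ⟨-, -, -, p, hp⟩ := huw
  obtain ⟨-, -, -, q, hq⟩ := hwv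
  refine ⟨huv, hu, hv, p.append q, fun x hx hxu hxv hxS' => ?_⟩
  obtain rfl | hxw := eq_or_ne x w
  · exact hw hxS'
  rcases (SimpleGraph.Walk.mem_support_append_iff p q).1 hx with hx | hx
  · exact hp x hx hxu hxw (hSS hxS')
  · exact hq x hx hxw hxv (hSS hxS')

end GStar

section ReachIn

variable {V : Type} {H : SimpleGraph V} {A : Set V} {a b c : V}

lemma ReachIn.refl (ha : a ∈ A) : ReachIn H A a a :=
  ⟨.nil, by simpa using ha⟩

lemma ReachIn.cons (h : ReachIn H A c b) (ha : a ∈ A) (hac : H.Adj a c) :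
    ReachIn H A a b := by
  obtain ⟨p, hp⟩ := h
  refine ⟨.cons hac p, fun x hx => ?_⟩
  rcases List.mem_cons.1 (SimpleGraph.Walk.support_cons hac p ▸ hx) with rfl | hx
  · exact ha
  · exact hp x hx

lemma ReachIn.mono {A' : Set V} (hAA' : A ⊆ A') (h : ReachIn H A a b) : ReachIn H A' a b :=
  let ⟨p, hp⟩ := h
  ⟨p, fun x hx => hAA' (hp x hx)⟩

end ReachIn

section Collapse

variable {V : Type} (G : SimpleGraph V) {S' S : Set V} (hSS : S' ⊆ S) {w : V} (hw : w ∉ S')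
  {B : Set V} (hB : B ⊆ S')
include hSS hw hB

/- The invariant also covers vertices `c` merely adjacent to the start `x`, so that it survives
a step through `w`, where `x = w` itself is not in `B`. -/
lemma reachIn_gStar_of_walk {x b : V} (p : (GStar G S).Walk x b)
    (hp : ∀ y ∈ p.support, y ∈ insert w B) (hb : b ∈ B) :
    ∀ c ∈ B, (c = x ∨ (GStar G S).Adj c x) → ReachIn (GStar G S') B c b := by
  induction p with
  | nil =>
    rintro c hc (rfl | hcb)
    · exact .refl hc
    · exact (ReachIn.refl hb).cons hc (gStar_adj_of_subset G hSS (hB hc) (hB hb) hcb)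
  | @cons x y b hxy p ih =>
    have hreach := ih (fun z hz => hp z (List.mem_cons_of_mem _ hz)) hb
    rcases hp x (List.mem_cons_self ..) with rfl | hx
    · have hy : y ∈ B := by
        rcases hp y (List.mem_cons_of_mem _ p.start_mem_support) with rfl | hy
        · exact absurd hxy (SimpleGraph.irrefl _)
        · exact hy
      rintro c hc (rfl | hcx)
      · exact absurd (hB hc) hw
      obtain rfl | hcy := eq_or_ne c y
      · exact hreach c hc (.inl rfl)
      · exact (hreach y hy (.inl rfl)).cons hc
          (gStar_adj_of_adj_of_adj G hSS hw (hB hc) (hB hy) hcy hcx hxy)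
    · have hxb := hreach x hx (.inr hxy)
      rintro c hc (rfl | hcx)
      · exact hxb
      · exact hxb.cons hc (gStar_adj_of_subset G hSS (hB hc) (hB hx) hcx)

lemma reachIn_gStar_of_reachIn_insert {a b : V} (ha : a ∈ B) (hb : b ∈ B)
    (h : ReachIn (GStar G S) (insert w B) a b) : ReachIn (GStar G S') B a b :=
  let ⟨p, hp⟩ := h
  reachIn_gStar_of_walk G hSS hw hB p hp hb a ha (.inl rfl)

lemma discOn_gStar_of_discOn {A : Set V} (hBA : B ⊆ A) (hA : A ⊆ insert w B)
    (h : DiscOn (GStar G S') B) : DiscOn (GStar G S) A := by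
  obtain ⟨a, ha, b, hb, hab⟩ := h
  exact ⟨a, hBA ha, b, hBA hb, fun h' =>
    hab (reachIn_gStar_of_reachIn_insert G hSS hw hB ha hb (h'.mono hA))⟩

end Collapse

/-- With `V = Fin n` (vertices `1, …, n`), `N_m` the first `m`
vertices, and `G*(N_m)` as above: if `G*(N_{m−1}) \ U` is disconnected (for
`U ⊆ N_{m−1}`), then both `G*(N_m) \ (U ∪ {m})` and `G*(N_m) \ U` are
disconnected, where `m` denotes the last vertex of `N_m`. -/
theorem stmt_17 {n : ℕ} (G : SimpleGraph (Fin n)) (m : ℕ)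
    (hm : 2 ≤ m) (hmn : m ≤ n)
    (U : Set (Fin n))
    (hdisc : DiscOn (GStar G {i : Fin n | (i : ℕ) < m - 1})
      ({i : Fin n | (i : ℕ) < m - 1} \ U)) :
    DiscOn (GStar G {i : Fin n | (i : ℕ) < m})
      ({i : Fin n | (i : ℕ) < m} \ (U ∪ {(⟨m - 1, by omega⟩ : Fin n)})) ∧
    DiscOn (GStar G {i : Fin n | (i : ℕ) < m})
      ({i : Fin n | (i : ℕ) < m} \ U) := by
  have hSS : {i : Fin n | (i : ℕ) < m - 1} ⊆ {i : Fin n | (i : ℕ) < m} :=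
    fun i (hi : (i : ℕ) < m - 1) => show (i : ℕ) < m by omega
  have hw : (⟨m - 1, by omega⟩ : Fin n) ∉ {i : Fin n | (i : ℕ) < m - 1} := by simp
  have hcover : {i : Fin n | (i : ℕ) < m} \ U ⊆
      insert ⟨m - 1, by omega⟩ ({i : Fin n | (i : ℕ) < m - 1} \ U) := by
    rintro i ⟨hi, hiU⟩
    simp only [Set.mem_insert_iff, Set.mem_sdiff, Set.mem_ofPred_eq, Fin.ext_iff] at hi ⊢
    rcases Nat.lt_or_ge i (m - 1) with h | h
    exacts [.inr ⟨h, hiU⟩, .inl (by omega)]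
  have hremove : {i : Fin n | (i : ℕ) < m - 1} \ U ⊆
      {i : Fin n | (i : ℕ) < m} \ (U ∪ {⟨m - 1, by omega⟩}) := by
    rintro i ⟨hi, hiU⟩
    simp only [Set.mem_sdiff, Set.mem_union, Set.mem_singleton_iff, Fin.ext_iff,
      Set.mem_ofPred_eq] at hi ⊢
    exact ⟨by omega, not_or.2 ⟨hiU, by omega⟩⟩
  exact ⟨discOn_gStar_of_discOn G hSS hw Set.sdiff_subset hremove
      ((Set.sdiff_subset_sdiff_right Set.subset_union_left).trans hcover) hdisc,
    discOn_gStar_of_discOn G hSS hw Set.sdiff_subset (Set.sdiff_subset_sdiff_left hSS)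
      hcover hdisc⟩
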